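/- Let λ, μ ∈ ℝ with μ > 0 and 3λ + 2μ > 0. There exists a constant c > 0, depending only on λ and μ, such that for all x, y in the closed lower half-space {x₃ ≤ 0} with x ≠ y, every entry of the Neumann function satisfies |N_{ij}(x,y)| ≤ c/|x − y|, i = j = 1,2,3. -/

import Mathlib

/-! Every entry of `Γ(z)` and of `R¹(η)` is a constant times a product of coordinates of the
argument and powers of `f̃ = 1/|η|`, `g̃ = 1/(|η| − η₃)`, homogeneous of degree `−1`; the entries
of `R²` and `R³` are homogeneous of degree `−2` and `−3`. Since `|η_i| ≤ |η|`, and `g̃ ≤ f̃` when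
`η₃ ≤ 0`, each entry of `Rᵏ(η)` is bounded by a constant over `|η|ᵏ`. For `η = x − ỹ` with `x, y`
in the lower half-space, `|y₃| ≤ |η|` absorbs the factors `y₃`, `y₃²`, and `|x − y| ≤ |η|`. -/

open MeasureTheory Metric Set

noncomputable section

abbrev E3 := EuclideanSpace ℝ (Fin 3)

/-- Partial derivative of a scalar field in the k-th coordinate direction. -/
def pd (f : E3 → ℝ) (k : Fin 3) (x : E3) : ℝ := fderiv ℝ f x (EuclideanSpace.single k 1)

/-- Kronecker delta. -/
def kd (i j : Fin 3) : ℝ := if i = j then 1 else 0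

/-- Kelvin–Somigliana fundamental matrix `Γ` of the Lamé operator
(with `ν = λ/(2(λ+μ))`, `C_{μ,ν} = 1/(16πμ(1−ν))`). -/
def KelvinG (lam mu : ℝ) (x : E3) : Matrix (Fin 3) (Fin 3) ℝ :=
  let ν := lam / (2 * (lam + mu))
  let Cmn := 1 / (16 * Real.pi * mu * (1 - ν))
  fun i j => -Cmn * ((3 - 4*ν) * kd i j / ‖x‖ + x i * x j / ‖x‖^3)

/-- The matrix `R¹` in the decomposition of the Neumann function
(with `c_ν = 4(1−ν)(1−2ν)`, `f̃(η) = 1/|η|`, `g̃(η) = 1/(|η| − η₃)`). -/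
def Rmat1 (lam mu : ℝ) (η : E3) : Matrix (Fin 3) (Fin 3) ℝ :=
  let ν := lam / (2 * (lam + mu))
  let Cmn := 1 / (16 * Real.pi * mu * (1 - ν))
  let cν := 4 * (1 - ν) * (1 - 2*ν)
  let f := 1 / ‖η‖
  let g := 1 / (‖η‖ - η 2)
  fun i j => Cmn * ( -(f + cν * g) * kd i j - (3 - 4*ν) * η i * η j * f^3
    + cν * (kd i 2 * η j - kd j 2 * (1 - kd i 2) * η i) * f * g
    + cν * (1 - kd i 2) * (1 - kd j 2) * η i * η j * f * g^2 )

/-- The matrix `R²` in the decomposition of the Neumann function. -/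
def Rmat2 (lam mu : ℝ) (η : E3) : Matrix (Fin 3) (Fin 3) ℝ :=
  let ν := lam / (2 * (lam + mu))
  let Cmn := 1 / (16 * Real.pi * mu * (1 - ν))
  let f := 1 / ‖η‖
  fun i j => 2 * Cmn *
    ( (3 - 4*ν) * (kd i 2 * (1 - kd j 2) * η j + kd j 2 * (1 - kd i 2) * η i) * f^3
      - (1 - 2 * kd j 2) * kd i j * η 2 * f^3
      + 3 * (1 - 2 * kd j 2) * η i * η j * η 2 * f^5 )

/-- The matrix `R³` in the decomposition of the Neumann function. -/
def Rmat3 (lam mu : ℝ) (η : E3) : Matrix (Fin 3) (Fin 3) ℝ :=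
  let ν := lam / (2 * (lam + mu))
  let Cmn := 1 / (16 * Real.pi * mu * (1 - ν))
  let f := 1 / ‖η‖
  fun i j => 2 * Cmn * (1 - 2 * kd j 2) * (kd i j * f^3 - 3 * η i * η j * f^5)

/-- Reflection across the boundary plane: `ỹ = (y₁, y₂, −y₃)`. -/
def refl3 (y : E3) : E3 := y - (2 * y 2) • EuclideanSpace.single 2 1

/-- Neumann function of the Lamé operator in the half-space:
`N(x,y) = Γ(x−y) + R¹(x−ỹ) + y₃ R²(x−ỹ) + y₃² R³(x−ỹ)`. -/
def NeumannN (lam mu : ℝ) (x y : E3) : Matrix (Fin 3) (Fin 3) ℝ :=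
  fun i j => KelvinG lam mu (x - y) i j + Rmat1 lam mu (x - refl3 y) i j
    + y 2 * Rmat2 lam mu (x - refl3 y) i j + (y 2)^2 * Rmat3 lam mu (x - refl3 y) i j

def poissonRatio (lam mu : ℝ) : ℝ := lam / (2 * (lam + mu))

def kelvinConst (lam mu : ℝ) : ℝ := 1 / (16 * Real.pi * mu * (1 - poissonRatio lam mu))

def neumannConst (lam mu : ℝ) : ℝ :=
  4 * (1 - poissonRatio lam mu) * (1 - 2 * poissonRatio lam mu)

lemma abs_kd_le_one (i j : Fin 3) : |kd i j| ≤ 1 := by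
  unfold kd; split_ifs <;> norm_num

lemma abs_one_sub_kd_le_one (i j : Fin 3) : |1 - kd i j| ≤ 1 := by
  unfold kd; split_ifs <;> norm_num

lemma abs_one_sub_two_mul_kd_le_one (i j : Fin 3) : |1 - 2 * kd i j| ≤ 1 := by
  unfold kd; split_ifs <;> norm_num

lemma abs_apply_le_norm {ι : Type*} [Fintype ι] (v : EuclideanSpace ℝ ι) (i : ι) :
    |v i| ≤ ‖v‖ :=
  PiLp.norm_apply_le v i

lemma one_div_abs_norm_sub_le {ι : Type*} [Fintype ι] {η : EuclideanSpace ℝ ι} {k : ι}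
    (hη : η ≠ 0) (hk : η k ≤ 0) : 1 / |‖η‖ - η k| ≤ 1 / ‖η‖ := by
  have hpos : 0 < ‖η‖ := norm_pos_iff.2 hη
  rw [abs_of_pos (by linarith)]
  exact one_div_le_one_div_of_le hpos (by linarith)

section EntryBounds

variable (lam mu : ℝ) {η : E3} (i j : Fin 3)

/- Each bound: triangle inequality, then `|η_k| ≤ ‖η‖`, `|kd| ≤ 1` and `g̃ ≤ f̃` factor by factor;
what is left is exactly the right-hand side. -/

lemma abs_kelvinG_le (hη : η ≠ 0) :
    |KelvinG lam mu η i j| ≤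
      |kelvinConst lam mu| * (|3 - 4 * poissonRatio lam mu| + 1) / ‖η‖ := by
  have hi := abs_apply_le_norm η i
  have hj := abs_apply_le_norm η j
  have hk := abs_kd_le_one i j
  simp only [KelvinG, ← poissonRatio.eq_1, ← kelvinConst.eq_1]
  grw [abs_mul, abs_neg, abs_add_le]
  simp only [abs_mul, abs_div, abs_norm, abs_pow]
  grw [hi, hj, hk]
  have := norm_ne_zero_iff.2 hη
  exact le_of_eq (by field_simp)

lemma abs_rmat1_le (hη : η ≠ 0) (h2 : η 2 ≤ 0) :
    |Rmat1 lam mu η i j| ≤ |kelvinConst lam mu| *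
      (1 + |3 - 4 * poissonRatio lam mu| + 4 * |neumannConst lam mu|) / ‖η‖ := by
  have hi := abs_apply_le_norm η i
  have hj := abs_apply_le_norm η j
  have hg := one_div_abs_norm_sub_le hη h2
  have hk := abs_kd_le_one i j
  have hki := abs_kd_le_one i 2
  have hkj := abs_kd_le_one j 2
  have hki' := abs_one_sub_kd_le_one i 2
  have hkj' := abs_one_sub_kd_le_one j 2
  simp only [Rmat1, ← poissonRatio.eq_1, ← kelvinConst.eq_1, ← neumannConst.eq_1]
  grw [abs_mul, abs_add_le, abs_add_le, abs_sub (_ * _)]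
  simp only [abs_mul, abs_neg, abs_pow]
  grw [abs_add_le, abs_sub (_ * _)]
  simp only [abs_mul, abs_div, abs_norm, abs_one]
  grw [hi, hj, hg, hk, hki, hkj, hki', hkj']
  have := norm_ne_zero_iff.2 hη
  exact le_of_eq (by field_simp; ring)

lemma abs_rmat2_le (hη : η ≠ 0) :
    |Rmat2 lam mu η i j| ≤
      4 * |kelvinConst lam mu| * (|3 - 4 * poissonRatio lam mu| + 2) / ‖η‖ ^ 2 := by
  have hi := abs_apply_le_norm η i
  have hj := abs_apply_le_norm η j
  have h2 := abs_apply_le_norm η 2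
  have hk := abs_kd_le_one i j
  have hki := abs_kd_le_one i 2
  have hkj := abs_kd_le_one j 2
  have hki' := abs_one_sub_kd_le_one i 2
  have hkj' := abs_one_sub_kd_le_one j 2
  have hs := abs_one_sub_two_mul_kd_le_one j 2
  simp only [Rmat2, ← poissonRatio.eq_1, ← kelvinConst.eq_1]
  grw [abs_mul, abs_add_le, abs_sub (_ * _)]
  simp only [abs_mul, abs_pow]
  grw [abs_add_le]
  simp only [abs_mul, abs_div, abs_norm, abs_one, abs_two]
  grw [hi, hj, h2, hk, hki, hkj, hki', hkj', hs]
  have := norm_ne_zero_iff.2 hη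
  exact le_of_eq (by field_simp; ring)

lemma abs_rmat3_le (hη : η ≠ 0) :
    |Rmat3 lam mu η i j| ≤ 8 * |kelvinConst lam mu| / ‖η‖ ^ 3 := by
  have hi := abs_apply_le_norm η i
  have hj := abs_apply_le_norm η j
  have hk := abs_kd_le_one i j
  have hs := abs_one_sub_two_mul_kd_le_one j 2
  simp only [Rmat3, ← poissonRatio.eq_1, ← kelvinConst.eq_1]
  grw [abs_mul, abs_sub]
  simp only [abs_mul, abs_div, abs_norm, abs_one, abs_two, abs_pow]
  grw [hi, hj, hk, hs]
  have := norm_ne_zero_iff.2 hη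
  exact le_of_eq (by field_simp; ring)

lemma abs_rmat1_add_mul_rmat2_add_sq_mul_rmat3_le (hη : η ≠ 0) (h2 : η 2 ≤ 0) {t : ℝ}
    (ht : |t| ≤ ‖η‖) :
    |Rmat1 lam mu η i j + t * Rmat2 lam mu η i j + t ^ 2 * Rmat3 lam mu η i j| ≤
      |kelvinConst lam mu| *
        (17 + 5 * |3 - 4 * poissonRatio lam mu| + 4 * |neumannConst lam mu|) / ‖η‖ := by
  grw [abs_add_le, abs_add_le, abs_mul, abs_mul, abs_pow, abs_rmat1_le lam mu i j hη h2,
    abs_rmat2_le lam mu i j hη, abs_rmat3_le lam mu i j hη, ht]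
  have := norm_ne_zero_iff.2 hη
  exact le_of_eq (by field_simp; ring)

end EntryBounds

lemma sub_refl3_apply_two (x y : E3) : (x - refl3 y) 2 = x 2 + y 2 := by
  simp only [refl3, PiLp.sub_apply, PiLp.smul_apply, PiLp.single_eq_same, smul_eq_mul, mul_one]
  ring

lemma norm_sub_le_norm_sub_refl3 {x y : E3} (hx : x 2 ≤ 0) (hy : y 2 ≤ 0) :
    ‖x - y‖ ≤ ‖x - refl3 y‖ := by
  rw [EuclideanSpace.norm_eq, EuclideanSpace.norm_eq]
  refine Real.sqrt_le_sqrt ?_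
  simp only [PiLp.sub_apply, Real.norm_eq_abs, sq_abs, Fin.sum_univ_three, refl3, PiLp.smul_apply,
    PiLp.single_apply, smul_eq_mul, mul_ite, mul_one, mul_zero, Fin.reduceEq, ↓reduceIte, sub_zero,
    add_le_add_iff_left]
  nlinarith

lemma abs_apply_two_le_norm_sub_refl3 {x y : E3} (hx : x 2 ≤ 0) (hy : y 2 ≤ 0) :
    |y 2| ≤ ‖x - refl3 y‖ :=
  calc |y 2| ≤ |(x - refl3 y) 2| := by
        rw [sub_refl3_apply_two, abs_of_nonpos hy, abs_of_nonpos (by linarith)]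
        linarith
    _ ≤ ‖x - refl3 y‖ := abs_apply_le_norm _ 2

theorem neumann_pointwise_bound_general (lam mu : ℝ) :
    ∃ c : ℝ, 0 < c ∧ ∀ x y : E3, x 2 ≤ 0 → y 2 ≤ 0 → x ≠ y →
      ∀ i j : Fin 3, |NeumannN lam mu x y i j| ≤ c / ‖x - y‖ := by
  set C := |kelvinConst lam mu|
  set a := |3 - 4 * poissonRatio lam mu|
  set b := |neumannConst lam mu|
  refine ⟨C * (a + 1) + C * (17 + 5 * a + 4 * b) + 1, by positivity, ?_⟩
  intro x y hx hy hxy i j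
  have hxy' : x - y ≠ 0 := sub_ne_zero.2 hxy
  have hA : 0 < ‖x - y‖ := norm_pos_iff.2 hxy'
  have hAB := norm_sub_le_norm_sub_refl3 hx hy
  have hη : x - refl3 y ≠ 0 := norm_pos_iff.1 (hA.trans_le hAB)
  have hη2 : (x - refl3 y) 2 ≤ 0 := by rw [sub_refl3_apply_two]; linarith
  have hsplit : NeumannN lam mu x y i j = KelvinG lam mu (x - y) i j +
      (Rmat1 lam mu (x - refl3 y) i j + y 2 * Rmat2 lam mu (x - refl3 y) i j
        + y 2 ^ 2 * Rmat3 lam mu (x - refl3 y) i j) := by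
    simp only [NeumannN]; ring
  calc |NeumannN lam mu x y i j|
      ≤ C * (a + 1) / ‖x - y‖ + C * (17 + 5 * a + 4 * b) / ‖x - refl3 y‖ := by
        grw [hsplit, abs_add_le, abs_kelvinG_le lam mu i j hxy',
          abs_rmat1_add_mul_rmat2_add_sq_mul_rmat3_le lam mu i j hη hη2
            (abs_apply_two_le_norm_sub_refl3 hx hy)]
    _ ≤ C * (a + 1) / ‖x - y‖ + C * (17 + 5 * a + 4 * b) / ‖x - y‖ := by gcongr
    _ ≤ _ := by
        rw [← add_div]
        exact div_le_div_of_nonneg_right (by linarith) hA.le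

/-- Pointwise decay estimate for the Neumann function: `|N_{ij}(x,y)| ≤ c/|x−y|` for all
`x ≠ y` in the closed lower half-space. -/
theorem neumann_pointwise_bound (lam mu : ℝ) (hmu : 0 < mu) (hlam : 0 < 3*lam + 2*mu) :
    ∃ c : ℝ, 0 < c ∧ ∀ x y : E3, x 2 ≤ 0 → y 2 ≤ 0 → x ≠ y →
      ∀ i j : Fin 3, |NeumannN lam mu x y i j| ≤ c / ‖x - y‖ :=
  neumann_pointwise_bound_general lam mu

end
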